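/- There exists a universal constant C' > 0 such that the following holds. Let x_1, …, x_m be unit vectors in ℝ^d, let y_i ∈ {−1,+1}, set I_+ := {i ∈ [m] : y_i = +1}, and suppose the matrix X ∈ ℝ^{m×d} whose rows are the x_i satisfies ‖XX^T‖ ≤ C (spectral norm) for some C > 0. Let θ = (w_j, v_j, b_j)_{j=1}^n be parameters of a 2-layer ReLU network satisfying N_θ(x_i) ≥ 1 for all i ∈ I_+ and ∑_{j=1}^n v_j σ(b_j) ≤ 1/2. Then ∑_{j=1}^n (‖w_j‖² + v_j² + b_j²) ≥ √(|I_+|/(12C)). -/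

import Mathlib

/-- ReLU. -/
noncomputable def relu (z : ℝ) : ℝ := max z 0

/-- 2-layer ReLU network on ℝ^d. -/
noncomputable def net {d n : ℕ} (v : Fin n → ℝ) (w : Fin n → EuclideanSpace ℝ (Fin d))
    (b : Fin n → ℝ) (x : EuclideanSpace ℝ (Fin d)) : ℝ :=
  ∑ j, v j * relu ((inner ℝ (w j) x : ℝ) + b j)

/-- The Gram matrix X Xᵀ of the data points (rows x_i). -/
noncomputable def gram {d m : ℕ} (x : Fin m → EuclideanSpace ℝ (Fin d)) :
    Matrix (Fin m) (Fin m) ℝ :=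
  fun i j => (inner ℝ (x i) (x j) : ℝ)

/-- Spectral (operator) norm of a matrix. -/
noncomputable def specNorm {m : ℕ} (G : Matrix (Fin m) (Fin m) ℝ) : ℝ :=
  ‖LinearMap.toContinuousLinearMap (Matrix.toEuclideanLin G)‖

/-!
Since ReLU is 1-Lipschitz and the bias term is at most `1/2`, every positive example `x i` has
`1/2 ≤ ∑ j, |v j| * |⟪w j, x i⟫|`. Summing over the positive set `P`, each inner sum
`∑ i ∈ P, |⟪u, x i⟫|` is `⟪u, ∑ i ∈ P, ε i • x i⟫` for signs `ε`, and
`‖∑ i, c i • x i‖² = cᵀ (X Xᵀ) c ≤ ‖X Xᵀ‖ ‖c‖²` bounds it by `√(C #P) ‖u‖`. With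
`|v j| ‖w j‖ ≤ (v j² + ‖w j‖²) / 2` this gives `#P ≤ √(C #P) ‖θ‖²`, i.e. `#P ≤ C ‖θ‖⁴`.
-/

open Finset RealInnerProductSpace

lemma abs_relu_sub_relu_le (a b : ℝ) : |relu a - relu b| ≤ |a - b| :=
  abs_max_sub_max_le_abs a b 0

lemma net_sub_bias_le {d n : ℕ} (v : Fin n → ℝ) (w : Fin n → EuclideanSpace ℝ (Fin d))
    (b : Fin n → ℝ) (x : EuclideanSpace ℝ (Fin d)) :
    net v w b x - ∑ j, v j * relu (b j) ≤ ∑ j, |v j| * |⟪w j, x⟫| := by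
  rw [net, ← sum_sub_distrib]
  refine sum_le_sum fun j _ => ?_
  calc v j * relu (⟪w j, x⟫ + b j) - v j * relu (b j)
      ≤ |v j * (relu (⟪w j, x⟫ + b j) - relu (b j))| := by rw [mul_sub]; exact le_abs_self _
    _ ≤ |v j| * |⟪w j, x⟫| := by
      rw [abs_mul]
      refine mul_le_mul_of_nonneg_left ?_ (abs_nonneg _)
      simpa using abs_relu_sub_relu_le (⟪w j, x⟫ + b j) (b j)

lemma specNorm_nonneg {m : ℕ} (G : Matrix (Fin m) (Fin m) ℝ) : 0 ≤ specNorm G :=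
  norm_nonneg _

lemma norm_sum_smul_sq_le {d m : ℕ} (x : Fin m → EuclideanSpace ℝ (Fin d))
    (c : EuclideanSpace ℝ (Fin m)) :
    ‖∑ i, c i • x i‖ ^ 2 ≤ specNorm (gram x) * ‖c‖ ^ 2 := by
  set G := LinearMap.toContinuousLinearMap (Matrix.toEuclideanLin (gram x))
  have hquad : ‖∑ i, c i • x i‖ ^ 2 = ⟪c, G c⟫ := by
    rw [← real_inner_self_eq_norm_sq]
    simp only [sum_inner, inner_sum, real_inner_smul_left, real_inner_smul_right]
    rw [EuclideanSpace.inner_eq_star_dotProduct]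
    simp only [G, LinearMap.coe_toContinuousLinearMap', Matrix.ofLp_toLpLin, dotProduct,
      Matrix.toLin'_apply, Matrix.mulVec, gram, star_trivial, sum_mul]
    refine sum_congr rfl fun i _ => sum_congr rfl fun k _ => ?_
    rw [real_inner_comm]; ring
  calc ‖∑ i, c i • x i‖ ^ 2 = ⟪c, G c⟫ := hquad
    _ ≤ ‖c‖ * ‖G c‖ := real_inner_le_norm _ _
    _ ≤ ‖c‖ * (‖G‖ * ‖c‖) := by gcongr; exact G.le_opNorm c
    _ = specNorm (gram x) * ‖c‖ ^ 2 := by rw [specNorm]; ring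

lemma sum_abs_inner_le {d m : ℕ} (x : Fin m → EuclideanSpace ℝ (Fin d)) (P : Finset (Fin m))
    (u : EuclideanSpace ℝ (Fin d)) :
    ∑ i ∈ P, |⟪u, x i⟫| ≤ √(specNorm (gram x) * #P) * ‖u‖ := by
  set c : EuclideanSpace ℝ (Fin m) :=
    WithLp.toLp 2 fun i => if i ∈ P then (SignType.sign ⟪u, x i⟫ : ℝ) else 0
  have hc : ‖c‖ ^ 2 ≤ #P := by
    rw [EuclideanSpace.norm_sq_eq]
    calc ∑ i, ‖c i‖ ^ 2 ≤ ∑ i, if i ∈ P then (1 : ℝ) else 0 := by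
          refine sum_le_sum fun i _ => ?_
          split_ifs with hi <;> simp only [c, hi, if_true, if_false, norm_zero]
          · cases SignType.sign ⟪u, x i⟫ <;> simp
          · simp
      _ = #P := by rw [sum_boole, filter_mem_eq_inter, univ_inter]
  have hs : ‖∑ i, c i • x i‖ ≤ √(specNorm (gram x) * #P) :=
    Real.le_sqrt_of_sq_le ((norm_sum_smul_sq_le x c).trans (by gcongr; exact specNorm_nonneg _))
  calc ∑ i ∈ P, |⟪u, x i⟫| = ⟪u, ∑ i, c i • x i⟫ := by
        simp only [inner_sum, real_inner_smul_right, c, ite_mul, zero_mul, sum_ite_mem, univ_inter,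
          sign_mul_self]
    _ ≤ ‖u‖ * ‖∑ i, c i • x i‖ := real_inner_le_norm _ _
    _ ≤ √(specNorm (gram x) * #P) * ‖u‖ := by rw [mul_comm]; gcongr

lemma sum_abs_mul_norm_le {d n : ℕ} (v : Fin n → ℝ) (w : Fin n → EuclideanSpace ℝ (Fin d))
    (b : Fin n → ℝ) :
    ∑ j, |v j| * ‖w j‖ ≤ (∑ j, (‖w j‖ ^ 2 + v j ^ 2 + b j ^ 2)) / 2 := by
  rw [sum_div]
  refine sum_le_sum fun j _ => ?_
  nlinarith [two_mul_le_add_sq |v j| ‖w j‖, sq_abs (v j), sq_nonneg (b j)]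

lemma card_le_specNorm_mul_sq {d m n : ℕ} (x : Fin m → EuclideanSpace ℝ (Fin d))
    (v : Fin n → ℝ) (w : Fin n → EuclideanSpace ℝ (Fin d)) (b : Fin n → ℝ) (P : Finset (Fin m))
    (hfit : ∀ i ∈ P, 1 ≤ net v w b (x i)) (hbias : ∑ j, v j * relu (b j) ≤ 1 / 2) :
    (#P : ℝ) ≤ specNorm (gram x) * (∑ j, (‖w j‖ ^ 2 + v j ^ 2 + b j ^ 2)) ^ 2 := by
  set S := ∑ j, (‖w j‖ ^ 2 + v j ^ 2 + b j ^ 2)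
  set K := √(specNorm (gram x) * #P)
  have hmargin : ∀ i ∈ P, 1 / 2 ≤ ∑ j, |v j| * |⟪w j, x i⟫| := fun i hi => by
    linarith [hfit i hi, net_sub_bias_le v w b (x i)]
  have hcard : (#P : ℝ) ≤ K * S :=
    calc (#P : ℝ) = 2 * ∑ _i ∈ P, (1 / 2 : ℝ) := by rw [sum_const, nsmul_eq_mul]; ring
      _ ≤ 2 * ∑ i ∈ P, ∑ j, |v j| * |⟪w j, x i⟫| := by gcongr with i hi; exact hmargin i hi
      _ = 2 * ∑ j, |v j| * ∑ i ∈ P, |⟪w j, x i⟫| := by rw [sum_comm]; simp only [mul_sum]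
      _ ≤ 2 * ∑ j, |v j| * (K * ‖w j‖) := by gcongr with j; exact sum_abs_inner_le x P (w j)
      _ = 2 * K * ∑ j, |v j| * ‖w j‖ := by
        simp only [mul_sum]; exact sum_congr rfl fun j _ => by ring
      _ ≤ 2 * K * (S / 2) := by gcongr; exact sum_abs_mul_norm_le v w b
      _ = K * S := by ring
  rcases (Nat.cast_nonneg #P : (0 : ℝ) ≤ #P).eq_or_lt with hP | hP
  · rw [← hP]; exact mul_nonneg (specNorm_nonneg _) (sq_nonneg S)
  · refine le_of_mul_le_mul_left ?_ hP
    calc (#P : ℝ) * #P ≤ (K * S) * (K * S) := mul_self_le_mul_self hP.le hcard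
      _ = #P * (specNorm (gram x) * S ^ 2) := by
        rw [mul_mul_mul_comm, Real.mul_self_sqrt (mul_nonneg (specNorm_nonneg _) hP.le)]; ring

/-- Lemma B.2: if the bias contribution is small, the parameter norm is large. -/
theorem stmt12 :
    ∃ C' : ℝ, 0 < C' ∧
      ∀ (d m n : ℕ) (C : ℝ), 0 < C →
        ∀ (x : Fin m → EuclideanSpace ℝ (Fin d)) (y : Fin m → ℝ),
          (∀ i, ‖x i‖ = 1) →
          (∀ i, y i = 1 ∨ y i = -1) →
          specNorm (gram x) ≤ C →
          ∀ (v : Fin n → ℝ) (w : Fin n → EuclideanSpace ℝ (Fin d)) (b : Fin n → ℝ),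
            (∀ i, y i = 1 → 1 ≤ net v w b (x i)) →
            (∑ j, v j * relu (b j)) ≤ 1 / 2 →
            Real.sqrt ((({i : Fin m | y i = 1} : Set (Fin m)).ncard : ℝ) / (12 * C)) ≤
              ∑ j, (‖w j‖ ^ 2 + (v j) ^ 2 + (b j) ^ 2) := by
  refine ⟨1, one_pos, fun d m n C hC x y _ _ hG v w b hfit hbias => ?_⟩
  set S := ∑ j, (‖w j‖ ^ 2 + v j ^ 2 + b j ^ 2)
  have hcard : ({i : Fin m | y i = 1} : Set (Fin m)).ncard = #{i | y i = 1} := by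
    rw [← Set.ncard_coe_finset, coe_filter_univ]
  have hP := card_le_specNorm_mul_sq x v w b {i | y i = 1} (by simpa using hfit) hbias
  rw [hcard, Real.sqrt_le_iff]
  refine ⟨by positivity, (div_le_iff₀ (by positivity)).2 ?_⟩
  linarith [mul_le_mul_of_nonneg_right hG (sq_nonneg S), mul_nonneg hC.le (sq_nonneg S)]
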